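/- arXiv:1506.07012 — 2 statements merged into one kernel-verified Lean document; each statement's English description precedes it below -/
import Mathlib

section
/- The function φ(t) = 2π ∑_{n=1}^∞ (2π n⁴ e^{-9t/2} - 3 n² e^{-5t/2}) exp(-n² π e^{-2t}) is an even function of t on ℝ. -/
open Real

noncomputable def phi (t : ℝ) : ℝ :=
  2 * π * ∑' n : ℕ,
    (2 * π * ((n : ℝ) + 1) ^ 4 * Real.exp (-9 * t / 2)
      - 3 * ((n : ℝ) + 1) ^ 2 * Real.exp (-5 * t / 2))
    * Real.exp (-((n : ℝ) + 1) ^ 2 * π * Real.exp (-2 * t))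

/-!
With `θ x = ∑_{n ∈ ℤ} exp (-π n² x)`, Jacobi's identity `θ (1/x) = √x θ x` says exactly that
`G t = exp (-t/2) θ (exp (-2t))` is even. Differentiating the theta series termwise twice gives
`G'' = G / 4 + 2 φ`, and the second derivative of an even function is even.
-/

section EvenOdd

variable {𝕜 F : Type*} [NontriviallyNormedField 𝕜] [NormedAddCommGroup F] [NormedSpace 𝕜 F]
  {f : 𝕜 → F}

lemma Function.Even.deriv (hf : f.Even) : (deriv f).Odd := fun x => by
  conv_lhs => rw [← funext hf]
  rw [deriv_comp_neg, neg_neg]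

lemma Function.Odd.deriv (hf : f.Odd) : (deriv f).Even := fun x => by
  have hf' : f = fun y => -f (-y) := funext fun y => by rw [hf, neg_neg]
  conv_rhs => rw [hf']
  rw [deriv.fun_neg, deriv_comp_neg, neg_neg]

end EvenOdd

lemma tsum_int_eq_two_nsmul_tsum_nat_succ {G : Type*} [AddCommGroup G] [UniformSpace G]
    [IsUniformAddGroup G] [CompleteSpace G] [T2Space G] {f : ℤ → G}
    (hf : f.Even) (h0 : f 0 = 0) (hs : Summable f) :
    ∑' n : ℤ, f n = 2 • ∑' n : ℕ, f (n + 1) := by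
  rw [tsum_int_eq_zero_add_two_mul_tsum_pnat hf hs, h0, zero_add,
    tsum_pnat_eq_tsum_succ (f := fun m : ℕ => f m)]
  push_cast
  rfl

noncomputable def thetaMoment (k : ℕ) (x : ℝ) : ℝ :=
  ∑' n : ℤ, (n : ℝ) ^ (2 * k) * exp (-π * x * n ^ 2)

lemma summable_thetaMoment (k : ℕ) {x : ℝ} (hx : 0 < x) :
    Summable fun n : ℤ => (n : ℝ) ^ (2 * k) * exp (-π * x * n ^ 2) := by
  simpa only [mul_zero, zero_mul, sub_zero, Int.cast_abs, (even_two_mul k).pow_abs, ← mul_assoc]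
    using summable_pow_mul_jacobiTheta₂_term_bound 0 hx (2 * k)

lemma hasDerivAt_thetaMoment (k : ℕ) {x : ℝ} (hx : 0 < x) :
    HasDerivAt (thetaMoment k) (-π * thetaMoment (k + 1) x) x := by
  have hterm (n : ℤ) (y : ℝ) : HasDerivAt (fun y => (n : ℝ) ^ (2 * k) * exp (-π * y * n ^ 2))
      (-π * ((n : ℝ) ^ (2 * (k + 1)) * exp (-π * y * n ^ 2))) y := by
    have := (((hasDerivAt_id' y).const_mul (-π)).mul_const ((n : ℝ) ^ 2)).exp.const_mul
      ((n : ℝ) ^ (2 * k))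
    exact this.congr_deriv (by ring)
  have hbound (n : ℤ) (y : ℝ) (hy : y ∈ Set.Ioi (x / 2)) :
      ‖-π * ((n : ℝ) ^ (2 * (k + 1)) * exp (-π * y * n ^ 2))‖
        ≤ π * ((n : ℝ) ^ (2 * (k + 1)) * exp (-π * (x / 2) * n ^ 2)) := by
    have hpow : (0 : ℝ) ≤ (n : ℝ) ^ (2 * (k + 1)) := (even_two_mul _).pow_nonneg _
    rw [norm_mul, norm_neg, norm_of_nonneg pi_pos.le, norm_of_nonneg (by positivity)]
    have hy' : π * (x / 2) * n ^ 2 ≤ π * y * n ^ 2 := by gcongr; exact (Set.mem_Ioi.1 hy).le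
    gcongr _ * (_ * exp ?_)
    linarith
  have h := hasDerivAt_tsum_of_isPreconnected
    ((summable_thetaMoment (k + 1) (half_pos hx)).mul_left π) isOpen_Ioi isPreconnected_Ioi
    (fun n y _ => hterm n y) hbound (half_lt_self hx) (summable_thetaMoment k hx)
    (half_lt_self hx)
  rwa [tsum_mul_left] at h

lemma thetaMoment_zero_inv {x : ℝ} (hx : 0 < x) :
    thetaMoment 0 x⁻¹ = √x * thetaMoment 0 x := by
  simp only [thetaMoment, mul_zero, pow_zero, one_mul]
  rw [tsum_exp_neg_mul_int_sq hx, sqrt_eq_rpow, ← mul_assoc,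
    mul_one_div_cancel (rpow_pos_of_pos hx _).ne', one_mul]
  simp_rw [div_eq_mul_inv]

noncomputable def scaledTheta (t : ℝ) : ℝ :=
  exp (-t / 2) * thetaMoment 0 (exp (-2 * t))

lemma scaledTheta_even : scaledTheta.Even := fun t => by
  have hinv : exp (-2 * -t) = (exp (-2 * t))⁻¹ := by rw [← exp_neg]; ring_nf
  have hsqrt : √(exp (-2 * t)) = exp (-t) := by rw [← exp_half]; ring_nf
  rw [scaledTheta, scaledTheta, hinv, thetaMoment_zero_inv (exp_pos _), hsqrt, ← mul_assoc,
    ← exp_add]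
  ring_nf

lemma hasDerivAt_thetaMoment_exp (k : ℕ) (t : ℝ) :
    HasDerivAt (fun t => thetaMoment k (exp (-2 * t)))
      (2 * π * exp (-2 * t) * thetaMoment (k + 1) (exp (-2 * t))) t := by
  have h := (hasDerivAt_thetaMoment k (exp_pos (-2 * t))).comp t
    ((hasDerivAt_id' t).const_mul (-2)).exp
  exact h.congr_deriv (by ring)

lemma hasDerivAt_scaledTheta (t : ℝ) :
    HasDerivAt scaledTheta
      (-scaledTheta t / 2 + 2 * π * exp (-5 * t / 2) * thetaMoment 1 (exp (-2 * t))) t := by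
  have h := (((hasDerivAt_neg' t).div_const 2).exp).mul (hasDerivAt_thetaMoment_exp 0 t)
  refine h.congr_deriv ?_
  rw [scaledTheta, show -5 * t / 2 = -t / 2 + -2 * t by ring, exp_add]
  ring

lemma deriv_deriv_scaledTheta (t : ℝ) :
    deriv (deriv scaledTheta) t = scaledTheta t / 4 + 2 * π * (2 * π * exp (-9 * t / 2) *
      thetaMoment 2 (exp (-2 * t)) - 3 * exp (-5 * t / 2) * thetaMoment 1 (exp (-2 * t))) := by
  have hderiv : deriv scaledTheta = fun t =>
      -scaledTheta t / 2 + 2 * π * exp (-5 * t / 2) * thetaMoment 1 (exp (-2 * t)) :=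
    funext fun t => (hasDerivAt_scaledTheta t).deriv
  have h := ((hasDerivAt_scaledTheta t).neg.div_const 2).add
    ((((hasDerivAt_id' t).const_mul (-5)).div_const 2).exp.const_mul (2 * π) |>.mul
      (hasDerivAt_thetaMoment_exp 1 t))
  rw [hderiv]
  refine h.deriv.trans ?_
  rw [show -9 * t / 2 = -5 * t / 2 + -2 * t by ring, exp_add]
  ring

lemma phi_eq_thetaMoment (t : ℝ) :
    phi t = π * (2 * π * exp (-9 * t / 2) * thetaMoment 2 (exp (-2 * t))
      - 3 * exp (-5 * t / 2) * thetaMoment 1 (exp (-2 * t))) := by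
  set x := exp (-2 * t)
  have hs₂ := (summable_thetaMoment 2 (exp_pos (-2 * t))).mul_left (2 * π * exp (-9 * t / 2))
  have hs₁ := (summable_thetaMoment 1 (exp_pos (-2 * t))).mul_left (3 * exp (-5 * t / 2))
  set a : ℤ → ℝ := fun m => 2 * π * exp (-9 * t / 2) * ((m : ℝ) ^ (2 * 2) * exp (-π * x * m ^ 2))
    - 3 * exp (-5 * t / 2) * ((m : ℝ) ^ (2 * 1) * exp (-π * x * m ^ 2)) with ha
  have heven : a.Even := fun m => by
    simp only [ha, Int.cast_neg, (even_two_mul _).neg_pow, neg_sq]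
  have hsum : ∑' m, a m = 2 * π * exp (-9 * t / 2) * thetaMoment 2 x
      - 3 * exp (-5 * t / 2) * thetaMoment 1 x := by
    rw [hs₂.tsum_sub hs₁, tsum_mul_left, tsum_mul_left, thetaMoment, thetaMoment]
  have hterm (n : ℕ) : a (n + 1) = (2 * π * ((n : ℝ) + 1) ^ 4 * exp (-9 * t / 2)
      - 3 * ((n : ℝ) + 1) ^ 2 * exp (-5 * t / 2)) * exp (-((n : ℝ) + 1) ^ 2 * π * x) := by
    simp only [ha]
    push_cast
    ring_nf
  rw [← hsum, tsum_int_eq_two_nsmul_tsum_nat_succ heven (by simp [ha]) (hs₂.sub hs₁), phi,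
    tsum_congr hterm, nsmul_eq_mul]
  push_cast
  ring

theorem phi_even : ∀ t : ℝ, phi (-t) = phi t := by
  have hphi (t : ℝ) : phi t = (deriv (deriv scaledTheta) t - scaledTheta t / 4) / 2 := by
    rw [deriv_deriv_scaledTheta, phi_eq_thetaMoment]
    ring
  intro t
  rw [hphi, hphi, scaledTheta_even.deriv.deriv, scaledTheta_even]
end

section
/- Let (aₙ) be positive reals with ∑ 1/aₙ < ∞ and g(z) = ∑_{n=1}^∞ 1/(aₙ + z) for z ≥ 0. Then the kernel K(x, y) = g((x - y)²) on ℝ × ℝ is positive semidefinite: for all n, real z₁,…,zₙ, and complex c₁,…,cₙ, ∑_{i,j=1}^n g((z_i - z_j)²) c_i conj(c_j) ≥ 0. -/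
open Complex MeasureTheory Set


-- real exp as a series
lemma real_exp_tsum (x : ℝ) : Real.exp x = ∑' k : ℕ, x ^ k / k.factorial := by
  rw [Real.exp_eq_exp_ℝ, NormedSpace.exp_eq_tsum_div]

-- Gaussian kernel is PSD
lemma gauss_psd {n : ℕ} (z : Fin n → ℝ) (c : Fin n → ℂ) {t : ℝ} (ht : 0 ≤ t) :
    (∑ i, ∑ j, ((Real.exp (-(t * (z i - z j) ^ 2)) : ℝ) : ℂ) * c i * starRingEnd ℂ (c j)) =
      ((∑ i, ∑ j, ((Real.exp (-(t * (z i - z j) ^ 2)) : ℝ) : ℂ) * c i * starRingEnd ℂ (c j)).re : ℂ) ∧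
    0 ≤ (∑ i, ∑ j, ((Real.exp (-(t * (z i - z j) ^ 2)) : ℝ) : ℂ) * c i * starRingEnd ℂ (c j)).re := by
  set P : ℕ → Fin n → ℂ := fun k i => ((Real.exp (-(t * z i ^ 2)) * z i ^ k : ℝ) : ℂ) * c i with hP
  have hsumm : ∀ i j : Fin n, Summable (fun k : ℕ =>
      (((2 * t) ^ k / k.factorial : ℝ) : ℂ) * (P k i * starRingEnd ℂ (P k j))) := by
    intro i j
    have h1 : Summable (fun k : ℕ =>
        ((Real.exp (-(t * z i ^ 2)) * Real.exp (-(t * z j ^ 2))) *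
          ((2 * t * (z i * z j)) ^ k / k.factorial) : ℝ)) :=
      (Real.summable_pow_div_factorial (2 * t * (z i * z j))).mul_left _
    have h2 := ((Complex.summable_ofReal.mpr h1).mul_left (c i * starRingEnd ℂ (c j)))
    refine h2.congr fun k => ?_
    simp only [hP, map_mul, ← Complex.ofReal_pow, Complex.conj_ofReal]
    push_cast
    ring
  have key : ∀ i j : Fin n,
      ((Real.exp (-(t * (z i - z j) ^ 2)) : ℝ) : ℂ) * c i * starRingEnd ℂ (c j) =
        ∑' k : ℕ, (((2 * t) ^ k / k.factorial : ℝ) : ℂ) * (P k i * starRingEnd ℂ (P k j)) := by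
    intro i j
    have expand : Real.exp (-(t * (z i - z j) ^ 2)) =
        ∑' k : ℕ, ((2 * t) ^ k / k.factorial) *
          ((Real.exp (-(t * z i ^ 2)) * z i ^ k) * (Real.exp (-(t * z j ^ 2)) * z j ^ k)) := by
      have : Real.exp (-(t * (z i - z j) ^ 2)) =
          (Real.exp (-(t * z i ^ 2)) * Real.exp (-(t * z j ^ 2))) * Real.exp (2 * t * (z i * z j)) := by
        rw [← Real.exp_add, ← Real.exp_add]; ring_nf
      rw [this, real_exp_tsum (2 * t * (z i * z j)), ← tsum_mul_left]
      refine tsum_congr fun k => ?_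
      rw [mul_pow, mul_pow]
      ring
    calc ((Real.exp (-(t * (z i - z j) ^ 2)) : ℝ) : ℂ) * c i * starRingEnd ℂ (c j)
        = (∑' k : ℕ, (((2 * t) ^ k / k.factorial) *
            ((Real.exp (-(t * z i ^ 2)) * z i ^ k) * (Real.exp (-(t * z j ^ 2)) * z j ^ k)) : ℂ)) *
            (c i * starRingEnd ℂ (c j)) := by
          rw [expand, Complex.ofReal_tsum]; push_cast; ring
      _ = ∑' k : ℕ, (((2 * t) ^ k / k.factorial : ℝ) : ℂ) * (P k i * starRingEnd ℂ (P k j)) := by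
          rw [← tsum_mul_right]
          refine tsum_congr fun k => ?_
          simp only [hP, map_mul, ← Complex.ofReal_pow, Complex.conj_ofReal]
          push_cast
          ring
  have exch : (∑ i, ∑ j, ((Real.exp (-(t * (z i - z j) ^ 2)) : ℝ) : ℂ) * c i * starRingEnd ℂ (c j)) =
      ∑' k : ℕ, ((((2 * t) ^ k / k.factorial) * Complex.normSq (∑ i, P k i) : ℝ) : ℂ) := by
    have step1 : (∑ i, ∑ j, ((Real.exp (-(t * (z i - z j) ^ 2)) : ℝ) : ℂ) * c i * starRingEnd ℂ (c j)) =
        ∑' k : ℕ, ∑ i, ∑ j, (((2 * t) ^ k / k.factorial : ℝ) : ℂ) * (P k i * starRingEnd ℂ (P k j)) := by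
      have inner : ∀ i : Fin n,
          (∑ j, ((Real.exp (-(t * (z i - z j) ^ 2)) : ℝ) : ℂ) * c i * starRingEnd ℂ (c j)) =
            ∑' k : ℕ, ∑ j, (((2 * t) ^ k / k.factorial : ℝ) : ℂ) * (P k i * starRingEnd ℂ (P k j)) := by
        intro i
        rw [show (∑ j, ((Real.exp (-(t * (z i - z j) ^ 2)) : ℝ) : ℂ) * c i * starRingEnd ℂ (c j)) =
            ∑ j, ∑' k : ℕ, (((2 * t) ^ k / k.factorial : ℝ) : ℂ) * (P k i * starRingEnd ℂ (P k j)) from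
          Finset.sum_congr rfl fun j _ => key i j]
        exact (Summable.tsum_finsetSum (fun j _ => hsumm i j)).symm
      rw [Finset.sum_congr rfl fun i _ => inner i]
      exact (Summable.tsum_finsetSum (fun i _ => summable_sum (fun j _ => hsumm i j))).symm
    rw [step1]
    refine tsum_congr fun k => ?_
    have : (∑ i, ∑ j, (((2 * t) ^ k / k.factorial : ℝ) : ℂ) * (P k i * starRingEnd ℂ (P k j))) =
        (((2 * t) ^ k / k.factorial : ℝ) : ℂ) * ((∑ i, P k i) * starRingEnd ℂ (∑ j, P k j)) := by
      rw [map_sum, Finset.sum_mul_sum]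
      rw [Finset.mul_sum]
      refine Finset.sum_congr rfl fun i _ => ?_
      rw [Finset.mul_sum]
    rw [this, Complex.mul_conj]
    push_cast
    ring
  have hofreal : (∑ i, ∑ j, ((Real.exp (-(t * (z i - z j) ^ 2)) : ℝ) : ℂ) * c i * starRingEnd ℂ (c j)) =
      (((∑' k : ℕ, ((2 * t) ^ k / k.factorial) * Complex.normSq (∑ i, P k i)) : ℝ) : ℂ) := by
    rw [exch, Complex.ofReal_tsum]
  have hnn : 0 ≤ ∑' k : ℕ, ((2 * t) ^ k / k.factorial) * Complex.normSq (∑ i, P k i) := by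
    refine tsum_nonneg fun k => ?_
    have h2t : (0:ℝ) ≤ (2 * t) ^ k / k.factorial :=
      div_nonneg (pow_nonneg (by linarith) _) (Nat.cast_nonneg _)
    exact mul_nonneg h2t (Complex.normSq_nonneg _)
  constructor
  · rw [hofreal]; simp
  · rw [hofreal]; simpa using hnn

lemma inv_eq_integral {b : ℝ} (hb : 0 < b) :
    (1 : ℝ) / b = ∫ t in Ioi (0:ℝ), Real.exp (-(b * t)) := by
  have : (∫ t in Ioi (0:ℝ), Real.exp (-(b * t))) =
      b⁻¹ • ∫ x in Ioi (b * 0), Real.exp (-x) := by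
    rw [← integral_comp_mul_left_Ioi (fun x => Real.exp (-x)) 0 hb]
  rw [this, mul_zero, integral_exp_neg_Ioi_zero, smul_eq_mul, mul_one, one_div]


lemma single_psd {n : ℕ} (z : Fin n → ℝ) (c : Fin n → ℂ) {b : ℝ} (hb : 0 < b) :
    (∑ i, ∑ j, ((1 / (b + (z i - z j) ^ 2) : ℝ) : ℂ) * c i * starRingEnd ℂ (c j)).im = 0 ∧
    0 ≤ (∑ i, ∑ j, ((1 / (b + (z i - z j) ^ 2) : ℝ) : ℂ) * c i * starRingEnd ℂ (c j)).re := by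
  set H : ℝ → ℂ := fun t => ∑ i, ∑ j,
      Real.exp (-((b + (z i - z j) ^ 2) * t)) • (c i * starRingEnd ℂ (c j)) with hH
  have hpos : ∀ i j : Fin n, 0 < b + (z i - z j) ^ 2 := fun i j => by positivity
  have hint : ∀ i j : Fin n, Integrable
      (fun t => Real.exp (-((b + (z i - z j) ^ 2) * t)) • (c i * starRingEnd ℂ (c j)))
      (volume.restrict (Ioi 0)) := by
    intro i j
    have h := (exp_neg_integrableOn_Ioi 0 (hpos i j)).smul_const (c i * starRingEnd ℂ (c j))
    simpa only [neg_mul] using h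
  have hHint : Integrable H (volume.restrict (Ioi 0)) := by
    rw [hH]
    exact integrable_finset_sum _ (fun i _ => integrable_finset_sum _ fun j _ => hint i j)
  have hT : (∑ i, ∑ j, ((1 / (b + (z i - z j) ^ 2) : ℝ) : ℂ) * c i * starRingEnd ℂ (c j)) =
      ∫ t in Ioi (0:ℝ), H t := by
    rw [hH, integral_finset_sum _ (fun i _ => integrable_finset_sum _ fun j _ => hint i j)]
    refine Finset.sum_congr rfl fun i _ => ?_
    rw [integral_finset_sum _ (fun j _ => hint i j)]
    refine Finset.sum_congr rfl fun j _ => ?_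
    rw [mul_assoc, ← Complex.real_smul, inv_eq_integral (hpos i j), ← integral_smul_const]
  have hre_im : ∀ t ∈ Ioi (0:ℝ), (H t).im = 0 ∧ 0 ≤ (H t).re := by
    intro t ht
    have ht' : (0:ℝ) ≤ t := le_of_lt ht
    have hg := gauss_psd z c ht'
    set S : ℂ := ∑ i, ∑ j, ((Real.exp (-(t * (z i - z j) ^ 2)) : ℝ) : ℂ) * c i * starRingEnd ℂ (c j)
      with hS
    have him : S.im = 0 := by
      have := congrArg Complex.im hg.1
      simpa using this
    have hHt : H t = Real.exp (-(b * t)) • S := by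
      rw [hH, hS, Finset.smul_sum]
      refine Finset.sum_congr rfl fun i _ => ?_
      rw [Finset.smul_sum]
      refine Finset.sum_congr rfl fun j _ => ?_
      rw [mul_assoc, ← Complex.real_smul, smul_smul]
      congr 1
      rw [← Real.exp_add]
      congr 1
      ring
    constructor
    · rw [hHt, Complex.real_smul,
        show (((Real.exp (-(b * t)) : ℝ) : ℂ) * S).im = Real.exp (-(b * t)) * S.im by
          simp [Complex.mul_im, ← Complex.ofReal_exp], him, mul_zero]
    · rw [hHt, Complex.real_smul,
        show (((Real.exp (-(b * t)) : ℝ) : ℂ) * S).re = Real.exp (-(b * t)) * S.re by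
          simp [Complex.mul_re, ← Complex.ofReal_exp]]
      exact mul_nonneg (Real.exp_pos _).le hg.2
  have h1 := integral_im (μ := volume.restrict (Ioi (0:ℝ))) hHint
  have h2 := integral_re (μ := volume.restrict (Ioi (0:ℝ))) hHint
  simp only [RCLike.im_to_complex, RCLike.re_to_complex] at h1 h2
  constructor
  · rw [hT, ← h1]
    rw [setIntegral_congr_fun measurableSet_Ioi (fun t ht => (hre_im t ht).1)]
    exact integral_zero _ _
  · rw [hT, ← h2]
    exact setIntegral_nonneg measurableSet_Ioi fun t ht => (hre_im t ht).2

theorem g_kernel_positive_semidefinite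
    (a : ℕ → ℝ) (ha : ∀ n, 0 < a n) (hs : Summable fun n => 1 / a n)
    (g : ℝ → ℝ) (hg : ∀ z, g z = ∑' n : ℕ, 1 / (a n + z)) :
    ∀ (n : ℕ) (z : Fin n → ℝ) (c : Fin n → ℂ),
      (∑ i, ∑ j, (g ((z i - z j) ^ 2) : ℂ) * c i * starRingEnd ℂ (c j)).im = 0 ∧
      0 ≤ (∑ i, ∑ j, (g ((z i - z j) ^ 2) : ℂ) * c i * starRingEnd ℂ (c j)).re := by
  intro n z c
  set T : ℕ → ℂ := fun m =>
    ∑ i, ∑ j, ((1 / (a m + (z i - z j) ^ 2) : ℝ) : ℂ) * c i * starRingEnd ℂ (c j) with hTdef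
  have hsumm : ∀ i j : Fin n, Summable (fun m : ℕ =>
      ((1 / (a m + (z i - z j) ^ 2) : ℝ) : ℂ) * c i * starRingEnd ℂ (c j)) := by
    intro i j
    have hr : Summable (fun m : ℕ => (1 / (a m + (z i - z j) ^ 2) : ℝ)) := by
      refine Summable.of_nonneg_of_le (fun m => by have := ha m; positivity) (fun m => ?_) hs
      exact one_div_le_one_div_of_le (ha m) (le_add_of_nonneg_right (sq_nonneg _))
    have := (Complex.summable_ofReal.mpr hr).mul_right (c i * starRingEnd ℂ (c j))
    exact this.congr fun m => by ring
  have key : ∀ i j : Fin n,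
      ((g ((z i - z j) ^ 2) : ℝ) : ℂ) * c i * starRingEnd ℂ (c j) =
        ∑' m : ℕ, ((1 / (a m + (z i - z j) ^ 2) : ℝ) : ℂ) * c i * starRingEnd ℂ (c j) := by
    intro i j
    rw [hg, Complex.ofReal_tsum, tsum_mul_right, tsum_mul_right]
  have exch : (∑ i, ∑ j, ((g ((z i - z j) ^ 2) : ℝ) : ℂ) * c i * starRingEnd ℂ (c j)) =
      ∑' m : ℕ, T m := by
    have inner : ∀ i : Fin n,
        (∑ j, ((g ((z i - z j) ^ 2) : ℝ) : ℂ) * c i * starRingEnd ℂ (c j)) =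
          ∑' m : ℕ, ∑ j, ((1 / (a m + (z i - z j) ^ 2) : ℝ) : ℂ) * c i * starRingEnd ℂ (c j) := by
      intro i
      rw [Finset.sum_congr rfl fun j _ => key i j]
      exact (Summable.tsum_finsetSum (fun j _ => hsumm i j)).symm
    rw [Finset.sum_congr rfl fun i _ => inner i]
    exact (Summable.tsum_finsetSum (fun i _ => summable_sum (fun j _ => hsumm i j))).symm
  have hTm : ∀ m : ℕ, T m = (((T m).re : ℝ) : ℂ) := by
    intro m
    have h := single_psd z c (ha m)
    apply Complex.ext
    · simp
    · exact h.1
  have hTre : ∀ m : ℕ, 0 ≤ (T m).re := fun m => (single_psd z c (ha m)).2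
  have final : (∑ i, ∑ j, ((g ((z i - z j) ^ 2) : ℝ) : ℂ) * c i * starRingEnd ℂ (c j)) =
      ((∑' m : ℕ, (T m).re : ℝ) : ℂ) := by
    rw [exch, Complex.ofReal_tsum]
    exact tsum_congr fun m => hTm m
  rw [final]
  refine ⟨by simp, by simpa using tsum_nonneg hTre⟩
end
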